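/- arXiv:0710.1281 — 4 statements merged into one kernel-verified Lean document; each statement's English description precedes it below -/
import Mathlib

section
/- For a K-sparse set E in the complex plane (any two distinct points of E are at distance at least K) and any point z ∈ ℂ, letting s denote a point of E closest to z, one has ∑_{m ∈ E, m ≠ s} 1/|z−m|³ ≤ 200·K⁻³. -/
/-!
A point `m ≠ s` of `E` is at distance at least `K / 2` from `z`, so it lies in a shell
`j K / 2 ≤ |z - m| ≤ (j + 1) K / 2` with `j ≥ 1`. The disjoint discs of radius `K / 2` around the
points of one shell fit in an annulus of area `(6 j + 3) π (K / 2)²`, so a shell holds at most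
`9 j` points, each contributing at most `(j K / 2)⁻³`. Summing over shells gives
`72 K⁻³ ∑ j⁻² ≤ 144 K⁻³`.
-/

/-- A set `E ⊆ ℂ` is `K`-sparse if any two distinct points of `E` are at
distance at least `K`. -/
def KSparse (K : ℝ) (E : Set ℂ) : Prop :=
  ∀ m ∈ E, ∀ m' ∈ E, m ≠ m' → K ≤ ‖m - m'‖

open Finset Metric MeasureTheory Measure Module

theorem MeasureTheory.Measure.addHaar_real_ball_of_pos {V : Type*} [NormedAddCommGroup V]
    [NormedSpace ℝ V] [FiniteDimensional ℝ V] [MeasurableSpace V] [BorelSpace V] (μ : Measure V)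
    [μ.IsAddHaarMeasure] (x : V) {r : ℝ} (hr : 0 < r) :
    μ.real (ball x r) = r ^ finrank ℝ V * μ.real (ball 0 1) := by
  simp [measureReal_def, addHaar_ball_of_pos μ x hr, hr.le]

/-- The disjoint balls of radius `r` around the points of `G` and the hole
`closedBall z (a - r)` all lie in `closedBall z (b + r)`; compare volumes. -/
theorem card_mul_pow_le_of_pairwise_le_dist {V : Type*} [NormedAddCommGroup V] [NormedSpace ℝ V]
    [FiniteDimensional ℝ V] {G : Finset V} {z : V} {r a b : ℝ} (hr : 0 < r)
    (hra : r ≤ a) (hab : a ≤ b) (hG : (G : Set V).Pairwise fun m m' => 2 * r ≤ dist m m')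
    (hGz : ∀ m ∈ G, a ≤ dist m z ∧ dist m z ≤ b) :
    #G * r ^ finrank ℝ V ≤ (b + r) ^ finrank ℝ V - (a - r) ^ finrank ℝ V := by
  let _ : MeasurableSpace V := borel V
  have _ : BorelSpace V := ⟨rfl⟩
  let μ : Measure V := addHaar
  have hdisj : (G : Set V).PairwiseDisjoint (ball · r) := fun m hm m' hm' hne =>
    ball_disjoint_ball (by linarith [hG hm hm' hne])
  have hhole : Disjoint (⋃ m ∈ G, ball m r) (closedBall z (a - r)) := by
    refine Set.disjoint_iUnion₂_left.2 fun m hm => Set.disjoint_left.2 fun x hxm hxz => ?_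
    have := dist_triangle_left m z x
    linarith [(hGz m hm).1, mem_ball.1 hxm, mem_closedBall.1 hxz]
  have hsub : (⋃ m ∈ G, ball m r) ∪ closedBall z (a - r) ⊆ closedBall z (b + r) := by
    refine Set.union_subset (Set.iUnion₂_subset fun m hm x hx => ?_)
      (closedBall_subset_closedBall (by linarith))
    have := dist_triangle x m z
    rw [mem_closedBall]
    linarith [(hGz m hm).2, mem_ball.1 hx]
  have hfin : μ (closedBall z (b + r)) ≠ ⊤ := measure_closedBall_lt_top.ne
  have hvol := measureReal_mono hsub hfin
  rw [measureReal_union hhole measurableSet_closedBall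
      (measure_ne_top_of_subset (Set.subset_union_left.trans hsub) hfin)
      (measure_ne_top_of_subset (Set.subset_union_right.trans hsub) hfin),
    measureReal_biUnion_finset hdisj (fun _ _ => measurableSet_ball)
      (fun _ _ => measure_ball_lt_top.ne)] at hvol
  simp only [addHaar_real_ball_of_pos _ _ hr, addHaar_real_closedBall _ _ (sub_nonneg.2 hra),
    addHaar_real_closedBall _ _ (by linarith : 0 ≤ b + r), sum_const, nsmul_eq_mul] at hvol
  have hunit : 0 < μ.real (ball 0 1) :=
    ENNReal.toReal_pos (measure_ball_pos μ 0 one_pos).ne' measure_ball_lt_top.ne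
  nlinarith

theorem sum_inv_sq_le_two {T : Finset ℕ} (hT : 0 ∉ T) : ∑ j ∈ T, ((j : ℝ) ^ 2)⁻¹ ≤ 2 := by
  have hsub : T ⊆ Ioo 0 (T.sup id + 1) := fun j hj =>
    mem_Ioo.2 ⟨Nat.pos_of_ne_zero (ne_of_mem_of_not_mem hj hT),
      Nat.lt_succ_of_le (le_sup (f := id) hj)⟩
  calc ∑ j ∈ T, ((j : ℝ) ^ 2)⁻¹
      ≤ ∑ j ∈ Ioo 0 (T.sup id + 1), ((j : ℝ) ^ 2)⁻¹ :=
        sum_le_sum_of_subset_of_nonneg hsub fun _ _ _ => by positivity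
    _ ≤ 2 := (sum_Ioo_inv_sq_le 0 _).trans_eq (by norm_num)

namespace KSparse

variable {K : ℝ} {E : Set ℂ}

theorem mono {E' : Set ℂ} (hE : KSparse K E) (h : E' ⊆ E) : KSparse K E' :=
  fun m hm m' hm' hne => hE m (h hm) m' (h hm') hne

theorem half_le_norm_sub (hE : KSparse K E) {z s m : ℂ} (hs : s ∈ E) (hm : m ∈ E \ {s})
    (hclosest : ‖z - s‖ ≤ ‖z - m‖) : K / 2 ≤ ‖z - m‖ := by
  have hsep := hE m hm.1 s hs hm.2
  have := norm_sub_le_norm_sub_add_norm_sub m z s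
  rw [norm_sub_rev m z] at this
  linarith

theorem card_le_nine_mul (hK : 0 < K) {G : Finset ℂ} (hG : KSparse K G) {z : ℂ} {j : ℕ}
    (hj : 1 ≤ j) (hGz : ∀ m ∈ G, j * (K / 2) ≤ ‖z - m‖ ∧ ‖z - m‖ ≤ (j + 1) * (K / 2)) :
    (#G : ℝ) ≤ 9 * j := by
  have hj' : (1 : ℝ) ≤ j := by exact_mod_cast hj
  have hdist : ∀ m, dist m z = ‖z - m‖ := fun m => by rw [dist_comm, dist_eq_norm]
  have hpack := card_mul_pow_le_of_pairwise_le_dist (G := G) (z := z) (half_pos hK)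
    (by nlinarith) (by nlinarith)
    (fun m hm m' hm' hne =>
      (by linarith [hG m hm m' hm' hne, dist_eq_norm m m'] : 2 * (K / 2) ≤ dist m m'))
    (fun m hm => hdist m ▸ hGz m hm)
  rw [Complex.finrank_real_complex] at hpack
  refine le_of_mul_le_mul_right ?_ (by positivity : 0 < (K / 2) ^ 2)
  nlinarith

theorem sum_one_div_norm_sub_pow_three_le (hK : 0 < K) {F : Finset ℂ} (hF : KSparse K F) {z : ℂ}
    (hFz : ∀ m ∈ F, K / 2 ≤ ‖z - m‖) : ∑ m ∈ F, 1 / ‖z - m‖ ^ 3 ≤ 144 / K ^ 3 := by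
  classical
  have hK2 : 0 < K / 2 := half_pos hK
  set shell : ℂ → ℕ := fun m => ⌊‖z - m‖ / (K / 2)⌋₊
  have hshell : ∀ m, shell m * (K / 2) ≤ ‖z - m‖ ∧ ‖z - m‖ ≤ (shell m + 1) * (K / 2) := fun m =>
    ⟨(le_div_iff₀ hK2).1 (Nat.floor_le (by positivity)),
      ((div_lt_iff₀ hK2).1 (Nat.lt_floor_add_one _)).le⟩
  have hshell_pos : ∀ m ∈ F, 1 ≤ shell m := fun m hm =>
    Nat.le_floor (by rw [Nat.cast_one, le_div_iff₀ hK2]; linarith [hFz m hm])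
  have hfiber : ∀ j ∈ F.image shell, (#{m ∈ F | shell m = j} : ℝ) ≤ 9 * j := fun j hj => by
    obtain ⟨m, hm, rfl⟩ := mem_image.1 hj
    refine (hF.mono (coe_subset.2 (filter_subset _ _))).card_le_nine_mul hK (hshell_pos m hm)
      fun m' hm' => (mem_filter.1 hm').2 ▸ hshell m'
  have hzero : 0 ∉ F.image shell := fun h => by
    obtain ⟨m, hm, hm0⟩ := mem_image.1 h
    exact Nat.one_le_iff_ne_zero.1 (hshell_pos m hm) hm0
  calc ∑ m ∈ F, 1 / ‖z - m‖ ^ 3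
      ≤ ∑ m ∈ F, 1 / (shell m * (K / 2)) ^ 3 := sum_le_sum fun m hm =>
        one_div_le_one_div_of_le (pow_pos (mul_pos (by exact_mod_cast hshell_pos m hm) hK2) 3)
          (pow_le_pow_left₀ (by positivity) (hshell m).1 3)
    _ = ∑ j ∈ F.image shell, #{m ∈ F | shell m = j} • (1 / ((j : ℝ) * (K / 2)) ^ 3) :=
        sum_comp (fun j : ℕ => 1 / ((j : ℝ) * (K / 2)) ^ 3) shell
    _ ≤ ∑ j ∈ F.image shell, 9 * j * (1 / ((j : ℝ) * (K / 2)) ^ 3) := sum_le_sum fun j hj => by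
        rw [nsmul_eq_mul]
        gcongr
        exact hfiber j hj
    _ = 72 / K ^ 3 * ∑ j ∈ F.image shell, ((j : ℝ) ^ 2)⁻¹ := by
        rw [mul_sum]
        refine sum_congr rfl fun j hj => ?_
        have : (j : ℝ) ≠ 0 := by exact_mod_cast ne_of_mem_of_not_mem hj hzero
        field_simp
        ring
    _ ≤ 72 / K ^ 3 * 2 := by gcongr; exact sum_inv_sq_le_two hzero
    _ = 144 / K ^ 3 := by ring

end KSparse

theorem sum_cubed_inverse_dist_le (K : ℝ) (hK : 0 < K) (E : Set ℂ)
    (hE : KSparse K E) (z : ℂ) (s : ℂ) (hs : s ∈ E)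
    (hclosest : ∀ m ∈ E, ‖z - s‖ ≤ ‖z - m‖) :
    ∑' m : ↥(E \ {s}), 1 / ‖z - (m : ℂ)‖ ^ 3 ≤ 200 / K ^ 3 := by
  classical
  refine tsum_le_of_sum_le' (by positivity) fun F => ?_
  have hF : ((F.image Subtype.val : Finset ℂ) : Set ℂ) ⊆ E \ {s} := fun x hx => by
    obtain ⟨m, -, rfl⟩ := mem_image.1 hx
    exact m.2
  rw [← sum_image (f := fun m : ℂ => 1 / ‖z - m‖ ^ 3) Subtype.val_injective.injOn]
  calc _ ≤ 144 / K ^ 3 :=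
        (hE.mono (hF.trans Set.sdiff_subset)).sum_one_div_norm_sub_pow_three_le hK
          fun m hm => hE.half_le_norm_sub hs (hF hm) (hclosest m (hF hm).1)
    _ ≤ 200 / K ^ 3 := by gcongr; norm_num
end

section
/- Let f be an entire function such that |f(z)| ≤ 1 implies |f'(z)| ≤ 2 for all z ∈ ℂ. Then |f'(z)| ≤ 2·max{|f(z)|, 1} for all z ∈ ℂ. -/
/-!
On `{|f| > 1}` the function `u_R = |f'| / (|f| (log |f| + R))` is the pullback, by a local branch
of `log f`, of the hyperbolic density of the half-plane `Re ζ > -R`, so `Δ log u_R ≥ u_R²`, while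
the Poincaré density `λ_r = 2r / (r² - |z|²)` of the disc `|z| < r` satisfies `Δ log λ_r = λ_r²`.
Hence at an interior maximum of `u_R / λ_r` on `{|z| ≤ r, |f| ≥ 1}` we get `u_R ≤ λ_r`; on
`|f| = 1` the hypothesis gives `u_R ≤ 2 / R`, which is `≤ λ_r` for `R = r`. So with `R = r`,
`|f'| (r² - |z|²) ≤ 2r |f| (log |f| + r)` wherever `|f| ≥ 1`, and `r → ∞` gives `|f'| ≤ 2 |f|`.
-/

open Filter Topology

theorem IsLocalMax.hasDerivAt_deriv_nonpos {f f' : ℝ → ℝ} {x₀ q : ℝ}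
    (h : IsLocalMax f x₀) (hf : ∀ᶠ x in 𝓝 x₀, HasDerivAt f (f' x) x)
    (hf' : HasDerivAt f' q x₀) : q ≤ 0 := by
  have hq : deriv (deriv f) x₀ = q :=
    (hf'.congr_of_eventuallyEq (hf.mono fun x hx => hx.deriv)).deriv
  -- if `q > 0`, then `x₀` is also a local minimum, so `f` is locally constant and `q = 0`
  by_contra! hpos
  have hmin := isLocalMin_of_deriv_deriv_pos (hq ▸ hpos) h.deriv_eq_zero
    hf.self_of_nhds.continuousAt
  have hconst : f =ᶠ[𝓝 x₀] fun _ => f x₀ :=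
    (hmin.and h).mono fun x hx => le_antisymm hx.2 hx.1
  have : deriv (deriv f) x₀ = 0 := by
    rw [(hconst.deriv.trans (Eventually.of_forall fun _ => deriv_const _ _)).deriv_eq]
    exact deriv_const _ _
  linarith

theorem HasDerivAt.re_comp_line {F : ℂ → ℂ} {F' w v : ℂ} {t : ℝ}
    (hF : HasDerivAt F F' (w + t * v)) :
    HasDerivAt (fun s : ℝ => (F (w + s * v)).re) (F' * v).re t := by
  have hline : HasDerivAt (fun z : ℂ => w + z * v) v t := by
    simpa using ((hasDerivAt_id (t : ℂ)).mul_const v).const_add w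
  exact (hF.comp (t : ℂ) hline).real_of_complex

theorem AnalyticAt.exists_re_eq_log_norm {F : ℂ → ℂ} {w : ℂ} (hF : AnalyticAt ℂ F w)
    (hw : F w ≠ 0) :
    ∃ L : ℂ → ℂ, AnalyticAt ℂ L w ∧ deriv L w = deriv F w / F w ∧
      ∀ᶠ z in 𝓝 w, (L z).re = Real.log ‖F z‖ := by
  have hslit : F w / F w ∈ Complex.slitPlane := by simp [hw]
  refine ⟨fun z => Complex.log (F z / F w) + Real.log ‖F w‖,
    ((hF.div_const).clog hslit).add analyticAt_const, ?_, ?_⟩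
  · rw [((hF.differentiableAt.hasDerivAt.div_const (F w)).clog hslit).add_const _ |>.deriv]
    field_simp
  · filter_upwards [hF.continuousAt.eventually_ne hw] with z hz
    rw [Complex.add_re, Complex.ofReal_re, Complex.log_re, norm_div,
      Real.log_div (norm_ne_zero_iff.2 hz) (norm_ne_zero_iff.2 hw), sub_add_cancel]

section LocalMax

variable {φ h : ℂ → ℂ} {w : ℂ} {r : ℝ}

theorem secondDeriv_along_line_nonpos (hφ : AnalyticAt ℂ φ w) (hh : AnalyticAt ℂ h w)
    (hφw : 0 < (φ w).re) (hw : ‖w‖ < r)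
    (hmax : IsLocalMax (fun z => (h z).re - Real.log (φ z).re + Real.log (r ^ 2 - ‖z‖ ^ 2)) w)
    (v : ℂ) :
    (deriv (deriv h) w * v ^ 2).re - (deriv (deriv φ) w * v ^ 2).re / (φ w).re
      + ((deriv φ w * v).re / (φ w).re) ^ 2 - 2 * ‖v‖ ^ 2 / (r ^ 2 - ‖w‖ ^ 2)
      - (2 * inner ℝ w v / (r ^ 2 - ‖w‖ ^ 2)) ^ 2 ≤ 0 := by
  set ζ : ℝ → ℂ := fun s => w + s * v
  have hζ : ∀ s, HasDerivAt ζ v s := fun s => by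
    simpa [ζ] using ((hasDerivAt_id s).ofReal_comp.mul_const v).const_add w
  have hζ0 : ζ 0 = w := by simp [ζ]
  have hζw : Tendsto ζ (𝓝 0) (𝓝 w) := hζ0 ▸ (hζ 0).continuousAt.tendsto
  have hnear : ∀ᶠ s in 𝓝 0, AnalyticAt ℂ φ (ζ s) ∧ AnalyticAt ℂ h (ζ s) ∧
      0 < (φ (ζ s)).re ∧ ‖ζ s‖ < r :=
    hζw.eventually <| hφ.eventually_analyticAt.and <| hh.eventually_analyticAt.and <|
      ((Complex.continuous_re.continuousAt.comp hφ.continuousAt).eventually (lt_mem_nhds hφw)).and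
      (continuous_norm.continuousAt.eventually (gt_mem_nhds hw))
  have hgpos : ∀ s, ‖ζ s‖ < r → 0 < r ^ 2 - ‖ζ s‖ ^ 2 := fun s hs =>
    sub_pos.2 (pow_lt_pow_left₀ hs (norm_nonneg _) two_ne_zero)
  have hψ : ∀ᶠ s in 𝓝 0, HasDerivAt
      (fun s => (h (ζ s)).re - Real.log (φ (ζ s)).re + Real.log (r ^ 2 - ‖ζ s‖ ^ 2))
      ((deriv h (ζ s) * v).re - (deriv φ (ζ s) * v).re / (φ (ζ s)).re
        - 2 * inner ℝ (ζ s) v / (r ^ 2 - ‖ζ s‖ ^ 2)) s := by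
    filter_upwards [hnear] with s ⟨hφs, hhs, hφpos, hs⟩
    have := ((hhs.differentiableAt.hasDerivAt.re_comp_line).sub
      ((hφs.differentiableAt.hasDerivAt.re_comp_line).log hφpos.ne')).add
      (((hζ s).norm_sq.const_sub (r ^ 2)).log (hgpos s hs).ne')
    exact this.congr_deriv (by simp only [ζ]; ring)
  have hline : ∀ {F : ℂ → ℂ} {F' : ℂ}, HasDerivAt F F' w →
      HasDerivAt (fun s : ℝ => (F (ζ s)).re) (F' * v).re 0 := fun hF =>
    HasDerivAt.re_comp_line (t := 0) (by simpa using hF)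
  have hc : (φ (ζ 0)).re ≠ 0 := hζ0 ▸ hφw.ne'
  have hg : r ^ 2 - ‖ζ 0‖ ^ 2 ≠ 0 := (hgpos 0 (hζ0 ▸ hw)).ne'
  have hψ' := ((hline (hh.deriv.differentiableAt.hasDerivAt.mul_const v)).sub
    ((hline (hφ.deriv.differentiableAt.hasDerivAt.mul_const v)).div
      (hline hφ.differentiableAt.hasDerivAt) hc)).sub
    ((((hζ 0).inner ℝ (hasDerivAt_const (0 : ℝ) v)).const_mul 2).div
      ((hζ 0).norm_sq.const_sub (r ^ 2)) hg)
  have hmaxζ : IsLocalMax _ (0 : ℝ) := (hζ0 ▸ hmax).comp_continuous (hζ 0).continuousAt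
  have := hmaxζ.hasDerivAt_deriv_nonpos hψ hψ'
  rw [hζ0] at this hc hg
  simp only [inner_zero_right, zero_add, real_inner_self_eq_norm_sq] at this
  refine le_of_eq_of_le ?_ this
  rw [sq v, ← mul_assoc, ← mul_assoc]
  field_simp
  ring

theorem norm_deriv_mul_le_of_isLocalMax (hφ : AnalyticAt ℂ φ w) (hh : AnalyticAt ℂ h w)
    (hφw : 0 < (φ w).re) (hw : ‖w‖ < r)
    (hmax : IsLocalMax (fun z => (h z).re - Real.log (φ z).re + Real.log (r ^ 2 - ‖z‖ ^ 2)) w) :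
    ‖deriv φ w‖ * (r ^ 2 - ‖w‖ ^ 2) ≤ 2 * r * (φ w).re := by
  -- the directions `1` and `I` add up to the Laplacian: the `h''` and `φ''` terms cancel
  have h1 := secondDeriv_along_line_nonpos hφ hh hφw hw hmax 1
  have hI := secondDeriv_along_line_nonpos hφ hh hφw hw hmax Complex.I
  have hg : 0 < r ^ 2 - ‖w‖ ^ 2 := sub_pos.2 (pow_lt_pow_left₀ hw (norm_nonneg _) two_ne_zero)
  simp only [one_pow, mul_one, norm_one, Complex.I_sq, mul_neg, Complex.neg_re, Complex.norm_I,
    Complex.mul_I_re, Complex.inner, one_mul, Complex.I_mul_re, Complex.conj_re,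
    Complex.conj_im, neg_neg] at h1 hI
  set c := (φ w).re
  set g := r ^ 2 - ‖w‖ ^ 2
  have hr : 0 < r := (norm_nonneg w).trans_lt hw
  have hnorm : ∀ z : ℂ, ‖z‖ ^ 2 = z.re ^ 2 + z.im ^ 2 := fun z => by
    rw [Complex.sq_norm, Complex.normSq_apply]; ring
  have hsq : (‖deriv φ w‖ * g) ^ 2 ≤ (2 * r * c) ^ 2 := by
    have hsum := add_nonpos h1 hI
    have hr2 : r ^ 2 = g + (w.re ^ 2 + w.im ^ 2) := by rw [← hnorm]; ring
    rw [mul_pow, mul_pow, mul_pow, hnorm, hr2]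
    field_simp at hsum
    linarith
  exact (pow_le_pow_iff_left₀ (by positivity) (by positivity) two_ne_zero).1 hsq

end LocalMax

/-- The paper's `u_R`. -/
noncomputable def uDensity (f : ℂ → ℂ) (R : ℝ) (z : ℂ) : ℝ :=
  ‖deriv f z‖ / (‖f z‖ * (Real.log ‖f z‖ + R))

theorem uDensity_mul_le_of_isLocalMax {f : ℂ → ℂ} {R r : ℝ} {w : ℂ}
    (hf : AnalyticAt ℂ f w) (hfw : f w ≠ 0) (hf'w : deriv f w ≠ 0)
    (hc : 0 < Real.log ‖f w‖ + R) (hw : ‖w‖ < r)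
    (hmax : IsLocalMax (fun z => uDensity f R z * (r ^ 2 - ‖z‖ ^ 2)) w) :
    uDensity f R w * (r ^ 2 - ‖w‖ ^ 2) ≤ 2 * r := by
  obtain ⟨L₁, hL₁, hdL₁, hreL₁⟩ := hf.exists_re_eq_log_norm hfw
  obtain ⟨L₂, hL₂, -, hreL₂⟩ := hf.deriv.exists_re_eq_log_norm hf'w
  have hlog : ∀ᶠ z in 𝓝 w, 0 < uDensity f R z * (r ^ 2 - ‖z‖ ^ 2) ∧
      (L₂ z - L₁ z).re - Real.log (L₁ z + R).re + Real.log (r ^ 2 - ‖z‖ ^ 2)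
        = Real.log (uDensity f R z * (r ^ 2 - ‖z‖ ^ 2)) := by
    filter_upwards [hreL₁, hreL₂, hf.continuousAt.eventually_ne hfw,
      hf.deriv.continuousAt.eventually_ne hf'w,
      ((hf.continuousAt.norm.log (norm_ne_zero_iff.2 hfw)).add continuousAt_const).eventually
        (lt_mem_nhds hc),
      continuous_norm.continuousAt.eventually (gt_mem_nhds hw)]
      with z h₁ h₂ hfz hf'z (hcz : 0 < Real.log ‖f z‖ + R) hz
    have hg : 0 < r ^ 2 - ‖z‖ ^ 2 :=
      sub_pos.2 (pow_lt_pow_left₀ hz (norm_nonneg _) two_ne_zero)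
    have hfz' : 0 < ‖f z‖ := norm_pos_iff.2 hfz
    have hf'z' : 0 < ‖deriv f z‖ := norm_pos_iff.2 hf'z
    refine ⟨by unfold uDensity; positivity, ?_⟩
    rw [Complex.sub_re, Complex.add_re, Complex.ofReal_re, h₁, h₂, uDensity,
      Real.log_mul (by positivity) hg.ne', Real.log_div hf'z'.ne' (by positivity),
      Real.log_mul hfz'.ne' hcz.ne']
    ring
  have hmax' : IsLocalMax
      (fun z => (L₂ z - L₁ z).re - Real.log (L₁ z + R).re + Real.log (r ^ 2 - ‖z‖ ^ 2)) w := by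
    filter_upwards [hmax, hlog] with z hz ⟨hpos, heq⟩
    rw [heq, hlog.self_of_nhds.2]
    exact Real.log_le_log hpos hz
  have hre : (L₁ w + R).re = Real.log ‖f w‖ + R := by
    rw [Complex.add_re, Complex.ofReal_re, hreL₁.self_of_nhds]
  have key := norm_deriv_mul_le_of_isLocalMax (φ := fun z => L₁ z + R)
    (hL₁.add analyticAt_const) (hL₂.sub hL₁) (hre ▸ hc) hw hmax'
  rw [hre, deriv_add_const, hdL₁, norm_div] at key
  rw [uDensity, div_mul_eq_mul_div, div_le_iff₀ (by positivity)]
  rw [div_mul_eq_mul_div, div_le_iff₀ (norm_pos_iff.2 hfw)] at key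
  linarith

theorem uDensity_mul_le {f : ℂ → ℂ} (hf : Differentiable ℂ f)
    (h : ∀ z : ℂ, ‖f z‖ ≤ 1 → ‖deriv f z‖ ≤ 2) {r : ℝ} (hr : 0 < r) {z : ℂ}
    (hz : ‖z‖ ≤ r) (hfz : 1 ≤ ‖f z‖) :
    uDensity f r z * (r ^ 2 - ‖z‖ ^ 2) ≤ 2 * r := by
  set K := Metric.closedBall (0 : ℂ) r ∩ {z | 1 ≤ ‖f z‖}
  have hcf : Continuous fun z => ‖f z‖ := hf.continuous.norm
  have hK : IsCompact K :=
    (isCompact_closedBall 0 r).inter_right (isClosed_le continuous_const hcf)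
  have hcont : ContinuousOn (fun z => uDensity f r z * (r ^ 2 - ‖z‖ ^ 2)) K := by
    intro z ⟨_, (hfz : 1 ≤ ‖f z‖)⟩
    have hc : 0 < Real.log ‖f z‖ + r := by linarith [Real.log_nonneg hfz]
    refine ContinuousAt.continuousWithinAt (ContinuousAt.mul (ContinuousAt.div ?_ ?_ ?_) ?_)
    · exact (hf.analyticAt z).deriv.continuousAt.norm
    · exact hcf.continuousAt.mul ((hcf.continuousAt.log (by positivity)).add continuousAt_const)
    · positivity
    · fun_prop
  obtain ⟨w, ⟨hwr, hfw⟩, hmax⟩ :=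
    hK.exists_isMaxOn ⟨z, mem_closedBall_zero_iff.2 hz, hfz⟩ hcont
  refine (hmax ⟨mem_closedBall_zero_iff.2 hz, hfz⟩).trans ?_
  dsimp only
  rcases (show 1 ≤ ‖f w‖ from hfw).eq_or_lt with hf_eq | hf_gt
  · have hw2 : 0 ≤ r ^ 2 - ‖w‖ ^ 2 :=
      sub_nonneg.2 (pow_le_pow_left₀ (norm_nonneg w) (mem_closedBall_zero_iff.1 hwr) 2)
    rw [uDensity, ← hf_eq, Real.log_one, zero_add, one_mul]
    calc ‖deriv f w‖ / r * (r ^ 2 - ‖w‖ ^ 2) ≤ 2 / r * r ^ 2 := by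
          gcongr
          · exact h w hf_eq.ge
          · exact sub_le_self _ (sq_nonneg _)
      _ = 2 * r := by field_simp
  rcases (mem_closedBall_zero_iff.1 hwr).eq_or_lt with hw_eq | hw_lt
  · simp [hw_eq, hr.le]
  by_cases hf'w : deriv f w = 0
  · simp [uDensity, hf'w, hr.le]
  refine uDensity_mul_le_of_isLocalMax (hf.analyticAt w) (norm_pos_iff.1 (by linarith))
    hf'w (by linarith [Real.log_pos hf_gt]) hw_lt (hmax.isLocalMax (inter_mem ?_ ?_))
  · exact mem_of_superset (Metric.isOpen_ball.mem_nhds (mem_ball_zero_iff.2 hw_lt))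
      Metric.ball_subset_closedBall
  · exact (hcf.continuousAt.eventually (lt_mem_nhds hf_gt)).mono fun _ => le_of_lt

theorem le_of_eventually_mul_sq_sub_le {x a b c : ℝ}
    (h : ∀ᶠ r in atTop, x * (r ^ 2 - a) ≤ b * r * (c + r)) : x ≤ b := by
  have hinv := tendsto_inv_atTop_zero (𝕜 := ℝ)
  have hL : Tendsto (fun r : ℝ => x * (1 - a * r⁻¹ ^ 2)) atTop (𝓝 x) := by
    simpa using ((hinv.pow 2).const_mul a |>.const_sub 1).const_mul x
  have hR : Tendsto (fun r : ℝ => b * (c * r⁻¹ + 1)) atTop (𝓝 b) := by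
    simpa using ((hinv.const_mul c).add_const 1).const_mul b
  refine le_of_tendsto_of_tendsto hL hR ?_
  filter_upwards [h, eventually_gt_atTop 0] with r hr hr0
  calc x * (1 - a * r⁻¹ ^ 2) = x * (r ^ 2 - a) / r ^ 2 := by field_simp
    _ ≤ b * r * (c + r) / r ^ 2 := by gcongr
    _ = b * (c * r⁻¹ + 1) := by field_simp

/-- Clunie–Hayman / Pommerenke: if an entire function satisfies `|f'| ≤ 2`
wherever `|f| ≤ 1`, then `|f'| ≤ 2 max{|f|, 1}` everywhere. -/
theorem entire_deriv_bound (f : ℂ → ℂ) (hf : Differentiable ℂ f)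
    (h : ∀ z : ℂ, ‖f z‖ ≤ 1 → ‖deriv f z‖ ≤ 2) :
    ∀ z : ℂ, ‖deriv f z‖ ≤ 2 * max (‖f z‖) 1 := by
  intro z
  rcases le_or_gt ‖f z‖ 1 with hz | hz
  · simpa [max_eq_right hz] using h z hz
  rw [max_eq_left hz.le]
  refine le_of_eventually_mul_sq_sub_le (a := ‖z‖ ^ 2) (c := Real.log ‖f z‖) ?_
  filter_upwards [eventually_ge_atTop ‖z‖, eventually_gt_atTop 0] with r hzr hr
  have hbound := uDensity_mul_le hf h hr hzr hz.le
  have hc : 0 < Real.log ‖f z‖ + r := by linarith [Real.log_pos hz]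
  rw [uDensity, div_mul_eq_mul_div, div_le_iff₀ (by positivity)] at hbound
  linarith
end

section
/- Let f₀, …, fₙ be meromorphic (in particular holomorphic) functions on a domain G ⊆ ℂ with no common zeros, and suppose each ratio fᵢ/fⱼ (where defined) has spherical derivative bounded by K. Then the holomorphic curve f = (f₀ : … : fₙ) satisfies f^# ≤ K·√n, where (f^#)² = (∑_{i<j} |fᵢ'fⱼ − fᵢfⱼ'|²)/(∑ⱼ |fⱼ|²)². -/
/-!
Squaring `|fᵢ'fⱼ - fᵢfⱼ'| ≤ K (aᵢ + aⱼ)` with `aⱼ = |fⱼ|²` and using `aᵢ + aⱼ ≤ S := ∑ₖ aₖ` gives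
`∑_{i<j} |fᵢ'fⱼ - fᵢfⱼ'|² ≤ K² S ∑_{i<j} (aᵢ + aⱼ)`, and every `aᵢ` occurs in exactly `n` of the
pairs, so the right-hand side is `K² n S²`.
-/

open Finset

theorem sum_sum_ite_lt_add {ι M : Type*} [Fintype ι] [LinearOrder ι] [AddCommMonoid M]
    (a : ι → M) :
    ∑ i, ∑ j, (if i < j then a i + a j else 0) = (Fintype.card ι - 1) • ∑ i, a i := by
  have hsplit : ∀ i j : ι, (if i < j then a i + a j else 0) =
      (if i < j then a i else 0) + if i < j then a j else 0 := fun i j => by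
    rw [ite_add_ite, add_zero]
  have hne : ∀ i j : ι, ((if i < j then a i else 0) + if j < i then a i else 0) =
      if j ≠ i then a i else 0 := fun i j => by
    rcases lt_trichotomy i j with h | rfl | h
    · simp [h, h.ne', h.not_gt]
    · simp
    · simp [h, h.ne, h.not_gt]
  calc ∑ i, ∑ j, (if i < j then a i + a j else 0)
      = ∑ i, ∑ j, ((if i < j then a i else 0) + if j < i then a i else 0) := by
        simp only [hsplit, sum_add_distrib]
        rw [sum_comm (f := fun i j => if i < j then a j else 0)]
    _ = ∑ i, (Fintype.card ι - 1) • a i := by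
        simp only [hne, ← sum_filter, filter_ne', sum_const, card_erase_of_mem (mem_univ _),
          card_univ]
    _ = (Fintype.card ι - 1) • ∑ i, a i := (smul_sum ..).symm

theorem sum_sum_ite_lt_add_sq_le {ι : Type*} [Fintype ι] [LinearOrder ι] (a : ι → ℝ)
    (ha : ∀ i, 0 ≤ a i) :
    ∑ i, ∑ j, (if i < j then (a i + a j) ^ 2 else 0) ≤
      (Fintype.card ι - 1 : ℕ) * (∑ i, a i) ^ 2 := by
  have hpair : ∀ i j : ι, i < j → (a i + a j) ^ 2 ≤ (a i + a j) * ∑ k, a k := fun i j hij => by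
    rw [sq]
    exact mul_le_mul_of_nonneg_left
      (add_le_sum (fun k _ => ha k) (mem_univ i) (mem_univ j) hij.ne) (add_nonneg (ha i) (ha j))
  calc ∑ i, ∑ j, (if i < j then (a i + a j) ^ 2 else 0)
      ≤ ∑ i, ∑ j, (if i < j then a i + a j else 0) * ∑ k, a k := by
        gcongr with i _ j _
        split_ifs with hij
        · exact hpair i j hij
        · simp
    _ = (∑ i, ∑ j, if i < j then a i + a j else 0) * ∑ k, a k := by simp only [sum_mul]
    _ = (Fintype.card ι - 1 : ℕ) * (∑ i, a i) ^ 2 := by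
        rw [sum_sum_ite_lt_add, nsmul_eq_mul, sq, mul_assoc]

theorem curve_sharp_le_of_ratios_general (n : ℕ) (K : ℝ) (hK : 0 ≤ K)
    (G : Set ℂ) (f : Fin (n + 1) → ℂ → ℂ)
    (hratio : ∀ i j : Fin (n + 1), (i : ℕ) < (j : ℕ) → ∀ z ∈ G,
      ‖deriv (f i) z * f j z - f i z * deriv (f j) z‖ ≤
        K * (‖f i z‖ ^ 2 + ‖f j z‖ ^ 2)) :
    ∀ z ∈ G,
      Real.sqrt (∑ i : Fin (n + 1), ∑ j : Fin (n + 1),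
          if (i : ℕ) < (j : ℕ) then
            ‖deriv (f i) z * f j z - f i z * deriv (f j) z‖ ^ 2
          else 0) ≤
        K * Real.sqrt n * ∑ j, ‖f j z‖ ^ 2 := by
  intro z hz
  simp only [← Fin.lt_def] at hratio ⊢
  set a : Fin (n + 1) → ℝ := fun j => ‖f j z‖ ^ 2
  have hsum : (∑ i, ∑ j, if i < j then
      ‖deriv (f i) z * f j z - f i z * deriv (f j) z‖ ^ 2 else 0) ≤ (K * √n * ∑ j, a j) ^ 2 :=
    calc _ ≤ ∑ i, ∑ j, if i < j then K ^ 2 * (a i + a j) ^ 2 else 0 := by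
          gcongr with i _ j _
          split_ifs with hij
          · rw [← mul_pow]
            exact pow_le_pow_left₀ (norm_nonneg _) (hratio i j hij z hz) 2
          · rfl
      _ = K ^ 2 * ∑ i, ∑ j, if i < j then (a i + a j) ^ 2 else 0 := by
          simp only [mul_sum, mul_ite, mul_zero]
      _ ≤ K ^ 2 * (n * (∑ j, a j) ^ 2) := by
          gcongr
          simpa using sum_sum_ite_lt_add_sq_le a fun j => sq_nonneg _
      _ = (K * √n * ∑ j, a j) ^ 2 := by
          rw [mul_pow, mul_pow, Real.sq_sqrt n.cast_nonneg]; ring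
  exact Real.sqrt_le_iff.mpr ⟨by positivity, hsum⟩

/-- If all the ratios of the coordinates of a holomorphic curve
`f = (f₀ : … : fₙ)` have spherical derivative at most `K` (equivalently
`|fᵢ'fⱼ - fᵢfⱼ'| ≤ K (|fᵢ|² + |fⱼ|²)`), then the curve satisfies
`f^# ≤ K √n`, where `(f^#)² = (∑_{i<j} |fᵢ'fⱼ - fᵢfⱼ'|²) / (∑ⱼ |fⱼ|²)²`. -/
theorem curve_sharp_le_of_ratios (n : ℕ) (K : ℝ) (hK : 0 ≤ K)
    (G : Set ℂ) (hG : IsOpen G) (f : Fin (n + 1) → ℂ → ℂ)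
    (hol : ∀ j, DifferentiableOn ℂ (f j) G)
    (nocommon : ∀ z ∈ G, ∃ j, f j z ≠ 0)
    (hratio : ∀ i j : Fin (n + 1), (i : ℕ) < (j : ℕ) → ∀ z ∈ G,
      ‖deriv (f i) z * f j z - f i z * deriv (f j) z‖ ≤
        K * (‖f i z‖ ^ 2 + ‖f j z‖ ^ 2)) :
    ∀ z ∈ G,
      Real.sqrt (∑ i : Fin (n + 1), ∑ j : Fin (n + 1),
          if (i : ℕ) < (j : ℕ) then
            ‖deriv (f i) z * f j z - f i z * deriv (f j) z‖ ^ 2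
          else 0) ≤
        K * Real.sqrt n * ∑ j, ‖f j z‖ ^ 2 :=
  curve_sharp_le_of_ratios_general n K hK G f hratio
end

section
/- Let (V, d_V) and (S, d_S) be metric spaces, W ⊆ V, g : V → S with g|_W surjective, and suppose for each a ∈ W there is a map h_a : B(g(a), δ) → V with h_a(g(a)) = a, g ∘ h_a = id on B(g(a), δ), and h_a L-Lipschitz. Let E be a set, P : S × Δ → S continuous with P(P(w,ζ),−ζ) = w and d_S(P(w,ζ'), P(w,ζ'')) ≤ ‖ζ'−ζ''‖, where Δ is the open ball of radius δ in ℂⁿ. Let φ_s : V^E → Δ (s ∈ E) satisfy ‖φ_s(a)‖ < δ and ‖φ_s(a') − φ_s(a'')‖ ≤ δ·‖a'−a''‖_∞. Assume the set {a ∈ V : d_V(a, W) ≤ ε} is complete and Lδ < ε/(1+ε). Then the map f : V^E → S^E defined by f_s(a) = P(g(a_s), φ_s(a)) is surjective. -/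
/-!
Choose `w s ∈ W` with `g (w s) = P (b s) 0` and let `h s` be the local right inverse of `g` at
`w s`. Since `P (·, φ)` undoes `P (·, -φ)`, it suffices to find a fixed point of
`T a = (s ↦ h s (P (b s) (-φ s a)))`. Each coordinate of `T` composes maps with Lipschitz
constants `δ`, `1` and `L`, so `T` is an `Lδ`-contraction for the sup distance, and its values lie
in the closed `Lδ`-balls around the `w s`. The condition `Lδ < ε / (1 + ε)` gives both `Lδ < 1`
and `Lδ ≤ ε`, so these balls lie in the complete `ε`-neighbourhood of `W`, and Banach's theorem
applies. The sup distance on `E → V`, possibly infinite, is the extended metric of `E →ᵤ V`.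
-/

open Metric Set Function UniformFun
open scoped NNReal ENNReal UniformConvergence

theorem LipschitzOnWith.mapsTo_ball {α β : Type*} [PseudoMetricSpace α] [PseudoMetricSpace β]
    {f : α → β} {K : ℝ≥0} {x : α} {r : ℝ} (hf : LipschitzOnWith K f (ball x r)) (hK : K ≠ 0) :
    MapsTo f (ball x r) (ball (f x) (K * r)) := fun y hy =>
  (hf.dist_le_mul y hy x (mem_ball_self (pos_of_mem_ball hy))).trans_lt <|
    mul_lt_mul_of_pos_left hy (NNReal.coe_pos.2 (pos_iff_ne_zero.2 hK))

namespace UniformFun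

variable {α β γ : Type*}

theorem isComplete_setOf_forall_mem [UniformSpace β] {N : Set β} (hN : IsComplete N) :
    IsComplete {f : α →ᵤ β | ∀ x, toFun f x ∈ N} := by
  have := hN.completeSpace_coe
  convert (postcomp_isUniformInducing (α := α) (isUniformInducing_val N)).isComplete_range
  ext f
  constructor
  · intro hf
    exact ⟨ofFun fun x => ⟨toFun f x, hf x⟩, rfl⟩
  · rintro ⟨f, rfl⟩ x
    exact (toFun f x).2

theorem lipschitzWith_of_forall_dist_le [PseudoMetricSpace β] [PseudoMetricSpace γ]
    {f : (α → β) → γ} {K : ℝ≥0} (hK : K ≠ 0)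
    (hf : ∀ a a' C, (∀ x, dist (a x) (a' x) ≤ C) → dist (f a) (f a') ≤ K * C) :
    LipschitzWith K (f ∘ toFun) := by
  intro a a'
  rcases eq_or_ne (edist a a') ⊤ with htop | hfin
  · simp [htop, ENNReal.mul_top (ENNReal.coe_ne_zero.mpr hK)]
  have hbound : ∀ x, dist (toFun a x) (toFun a' x) ≤ (edist a a').toReal := fun x => by
    rw [dist_edist]
    exact ENNReal.toReal_mono hfin edist_eval_le
  rw [comp_apply, comp_apply, edist_dist, ← ENNReal.ofReal_toReal hfin,
    ← ENNReal.ofReal_coe_nnreal, ← ENNReal.ofReal_mul K.coe_nonneg]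
  exact ENNReal.ofReal_le_ofReal (hf _ _ _ hbound)

theorem exists_isFixedPt [MetricSpace β] {N : Set β} (hN : IsComplete N)
    {T : (α → β) → α → β} {q : ℝ≥0} (hq : q < 1) (hT : LipschitzWith q (ofFun ∘ T ∘ toFun))
    (hTN : ∀ a x, T a x ∈ N) {a₀ : α → β} {C : ℝ} (ha₀ : ∀ x, dist (a₀ x) (T a₀ x) ≤ C) :
    ∃ a, IsFixedPt T a := by
  set F : (α →ᵤ β) → α →ᵤ β := ofFun ∘ T ∘ toFun
  have hF : MapsTo F {f | ∀ x, toFun f x ∈ N} {f | ∀ x, toFun f x ∈ N} :=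
    fun f _ => hTN (toFun f)
  have hcontr : ContractingWith q (hF.restrict F _ _) := ⟨hq, fun f f' => hT f f'⟩
  have hfin : edist (F (ofFun a₀)) (F (F (ofFun a₀))) ≠ ⊤ := by
    refine ne_top_of_le_ne_top ?_ (hT _ _)
    refine ENNReal.mul_ne_top ENNReal.coe_ne_top
      (ne_top_of_le_ne_top (ENNReal.ofReal_ne_top (r := C)) ?_)
    exact edist_le.mpr fun x => by rw [edist_dist]; exact ENNReal.ofReal_le_ofReal (ha₀ x)
  obtain ⟨a, -, ha, -⟩ := hcontr.exists_fixedPoint' (isComplete_setOf_forall_mem hN) hF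
    (hTN a₀) hfin
  exact ⟨toFun a, congrArg toFun ha⟩

end UniformFun

theorem exists_forall_eq_of_lipschitzOnWith {E V F : Type*} [MetricSpace V]
    [SeminormedAddCommGroup F] {H : E → F → V} {ψ : E → (E → V) → F} {δ : ℝ} {L : ℝ≥0}
    {N : Set V} (hN : IsComplete N)
    (hδ : 0 < δ) (hLδ : L * δ < 1) (hH : ∀ s, LipschitzOnWith L (H s) (ball 0 δ))
    (hHN : ∀ s, closedBall (H s 0) (L * δ) ⊆ N) (hψ : ∀ s a, ‖ψ s a‖ < δ)
    (hψlip : ∀ s a a' C, (∀ m, dist (a m) (a' m) ≤ C) → ‖ψ s a - ψ s a'‖ ≤ δ * C) :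
    ∃ a : E → V, ∀ s, H s (ψ s a) = a s := by
  set δ' : ℝ≥0 := ⟨δ, hδ.le⟩
  have hψball : ∀ s a, ψ s a ∈ ball 0 δ := fun s a => mem_ball_zero_iff.2 (hψ s a)
  have hψ' : ∀ s, LipschitzWith δ' (ψ s ∘ toFun) := fun s =>
    lipschitzWith_of_forall_dist_le (show (0 : ℝ≥0) < δ' from hδ).ne' fun a a' C hC => by
      rw [dist_eq_norm]
      exact hψlip s a a' C hC
  set T : (E → V) → E → V := fun a s => H s (ψ s a)
  have hT : LipschitzWith (L * δ') (ofFun ∘ T ∘ toFun) := lipschitzWith_iff.2 fun s =>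
    lipschitzOnWith_univ.1 <| (hH s).comp (hψ' s).lipschitzOnWith fun a _ => hψball s _
  have hTH : ∀ a s, dist (T a s) (H s 0) ≤ L * δ := fun a s =>
    ((hH s).dist_le_mul _ (hψball s a) 0 (mem_ball_self hδ)).trans <| by
      rw [dist_zero_right]
      exact mul_le_mul_of_nonneg_left (hψ s a).le L.coe_nonneg
  obtain ⟨a, ha⟩ := exists_isFixedPt hN (q := L * δ') hLδ hT (fun a s => hHN s (hTH a s))
    (a₀ := fun s => H s 0) (fun s => (dist_comm _ _).trans_le (hTH _ s))
  exact ⟨a, congrFun ha⟩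

theorem abstract_interpolation_surjective_general
    {V S : Type*} [MetricSpace V] [MetricSpace S]
    (n : ℕ) (W : Set V) (g : V → S)
    (δ ε : ℝ) (L : NNReal) (hδ : 0 < δ) (hε : 0 < ε)
    (hsurj : ∀ s : S, ∃ a ∈ W, g a = s)
    (hinv : ∀ a ∈ W, ∃ h : S → V, h (g a) = a ∧
      (∀ s ∈ Metric.ball (g a) δ, g (h s) = s) ∧
      LipschitzOnWith L h (Metric.ball (g a) δ))
    (E : Type*) (P : S → EuclideanSpace ℂ (Fin n) → S)
    (hPinv : ∀ w : S, ∀ ζ : EuclideanSpace ℂ (Fin n), ‖ζ‖ < δ →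
      P (P w ζ) (-ζ) = w)
    (hPlip : ∀ w : S, ∀ ζ ζ' : EuclideanSpace ℂ (Fin n), ‖ζ‖ < δ → ‖ζ'‖ < δ →
      dist (P w ζ) (P w ζ') ≤ ‖ζ - ζ'‖)
    (φ : E → (E → V) → EuclideanSpace ℂ (Fin n))
    (hφbd : ∀ s : E, ∀ a : E → V, ‖φ s a‖ < δ)
    (hφlip : ∀ s : E, ∀ a a' : E → V, ∀ C : ℝ,
      (∀ m : E, dist (a m) (a' m) ≤ C) → ‖φ s a - φ s a'‖ ≤ δ * C)
    (hcomplete : IsComplete {a : V | Metric.infDist a W ≤ ε})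
    (hcond : (L : ℝ) * δ < ε / (1 + ε)) :
    ∀ b : E → S, ∃ a : E → V, ∀ s : E, P (g (a s)) (φ s a) = b s := by
  intro b
  choose w hwW hgw using fun s => hsurj (P (b s) 0)
  choose h hhw hgh hh using fun s => hinv (w s) (hwW s)
  have hP : ∀ s, LipschitzOnWith 1 (P (b s)) (ball 0 δ) := fun s =>
    LipschitzOnWith.of_dist_le_mul fun ζ hζ ζ' hζ' => by
      simpa [dist_eq_norm] using hPlip _ _ _ (mem_ball_zero_iff.1 hζ) (mem_ball_zero_iff.1 hζ')
  have hPball : ∀ s, MapsTo (P (b s)) (ball 0 δ) (ball (g (w s)) δ) := fun s => by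
    simpa [hgw] using (hP s).mapsTo_ball one_ne_zero
  have hwN : ∀ s, closedBall ((h s ∘ P (b s)) 0) (L * δ) ⊆ {v | infDist v W ≤ ε} :=
    fun s v hv => by
      rw [comp_apply, ← hgw, hhw] at hv
      exact (infDist_le_dist_of_mem (hwW s)).trans
        (hv.trans (hcond.le.trans (div_le_self hε.le (by linarith))))
  obtain ⟨a, ha⟩ := exists_forall_eq_of_lipschitzOnWith hcomplete hδ
    (hcond.trans ((div_lt_one (by linarith)).2 (by linarith)))
    (fun s => mul_one L ▸ (hh s).comp (hP s) (hPball s)) hwN (ψ := fun s a => -φ s a)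
    (fun s a => by simpa using hφbd s a)
    (fun s a a' C hC => by simpa [neg_add_eq_sub, norm_sub_rev] using hφlip s a a' C hC)
  refine ⟨a, fun s => ?_⟩
  have hga : g (a s) = P (b s) (-φ s a) := by
    rw [← ha s]
    exact hgh s _ (hPball s (by simpa using hφbd s a))
  simpa [hga] using hPinv (b s) (-φ s a) (by simpa using hφbd s a)

/-- Abstract inverse-function-type lemma (Lemma on free interpolation):
under the local right-invertibility of `g` on `W`, completeness of the
`ε`-neighbourhood of `W`, the quasi-addition `P` and the small perturbations
`φ_s`, the map `a ↦ (s ↦ P (g (a s)) (φ s a))` from `V^E` to `S^E` is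
surjective. -/
theorem abstract_interpolation_surjective
    {V S : Type*} [MetricSpace V] [MetricSpace S]
    (n : ℕ) (W : Set V) (g : V → S)
    (δ ε : ℝ) (L : NNReal) (hδ : 0 < δ) (hε : 0 < ε)
    (hsurj : ∀ s : S, ∃ a ∈ W, g a = s)
    (hinv : ∀ a ∈ W, ∃ h : S → V, h (g a) = a ∧
      (∀ s ∈ Metric.ball (g a) δ, g (h s) = s) ∧
      LipschitzOnWith L h (Metric.ball (g a) δ))
    (E : Type*) (P : S → EuclideanSpace ℂ (Fin n) → S)
    (hPcont : Continuous fun p : S × EuclideanSpace ℂ (Fin n) => P p.1 p.2)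
    (hPinv : ∀ w : S, ∀ ζ : EuclideanSpace ℂ (Fin n), ‖ζ‖ < δ →
      P (P w ζ) (-ζ) = w)
    (hPlip : ∀ w : S, ∀ ζ ζ' : EuclideanSpace ℂ (Fin n), ‖ζ‖ < δ → ‖ζ'‖ < δ →
      dist (P w ζ) (P w ζ') ≤ ‖ζ - ζ'‖)
    (φ : E → (E → V) → EuclideanSpace ℂ (Fin n))
    (hφbd : ∀ s : E, ∀ a : E → V, ‖φ s a‖ < δ)
    (hφlip : ∀ s : E, ∀ a a' : E → V, ∀ C : ℝ,
      (∀ m : E, dist (a m) (a' m) ≤ C) → ‖φ s a - φ s a'‖ ≤ δ * C)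
    (hcomplete : IsComplete {a : V | Metric.infDist a W ≤ ε})
    (hcond : (L : ℝ) * δ < ε / (1 + ε)) :
    ∀ b : E → S, ∃ a : E → V, ∀ s : E, P (g (a s)) (φ s a) = b s :=
  abstract_interpolation_surjective_general n W g δ ε L hδ hε hsurj hinv E P hPinv hPlip φ hφbd
    hφlip hcomplete hcond
end
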